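/- arXiv:1507.06756 — 2 statements merged into one kernel-verified Lean document; each statement's English description precedes it below -/
import Mathlib

section
/- Let n > a ≥ 1 be coprime integers, with dual Hirzebruch–Jung expansions n/a = [b_1, …, b_r] and n/(n−a) = [a_1, …, a_e] (all entries ≥ 2). Then (b_1 − 1) + (b_2 − 1) + ⋯ + (b_r − 1) = (a_1 − 1) + ⋯ + (a_e − 1) = r + e − 1. -/
/-- Hirzebruch–Jung continued fraction: `hj [] = 0`, `hj (c :: cs) = c - (hj cs)⁻¹`.
(In particular `hj [c] = c` since `(0:ℚ)⁻¹ = 0`.) -/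
def hj : List ℚ → ℚ
  | [] => 0
  | c :: cs => c - (hj cs)⁻¹

/-- All proper nonempty tails (suffixes) of `l` have nonzero HJ value, i.e. the
continued fraction `hj l` is defined. -/
def hjTailsNonzero (l : List ℚ) : Prop :=
  ∀ l' : List ℚ, l' ≠ [] → l' ≠ l → l' <:+ l → hj l' ≠ 0

/-- The HJ continued fraction of `l` is defined and equals `0`. -/
def hjZero (l : List ℚ) : Prop :=
  hjTailsNonzero l ∧ hj l = 0

def castList (l : List ℤ) : List ℚ := l.map fun x => (x : ℚ)

/-!
Only the rationals `q = n/a` and `q' = n/(n-a)` matter, through the relation `q⁻¹ + q'⁻¹ = 1`.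
Since `[c, …] ∈ (c - 1, c]`, with equality only for `[c]`, the relation forces `b₁ = 2` or
`a₁ = 2`, and `b₁ = a₁ = 2` only for `B = A = [2]`. If, say, `a₁ = 2 < b₁`, then
`[b₁ - 1, b₂, …, b_r]` and `[a₂, …, a_e]` again satisfy the relation (it is equivalent to
`(q - 1)(q' - 1) = 1`), and both sides of `∑ (bᵢ - 1) = r + e - 1` drop by one, so induction on
`r + e` applies.
-/

theorem inv_add_inv_eq_one_iff {K : Type*} [Field K] {u v : K} (hu : u ≠ 0) (hv : v ≠ 0) :
    u⁻¹ + v⁻¹ = 1 ↔ (u - 1) * (v - 1) = 1 := by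
  rw [inv_add_inv hu hv, div_eq_one_iff_eq (mul_ne_zero hu hv)]
  constructor <;> intro h <;> linear_combination -h

section hj

variable {u v : ℚ} {l m : List ℚ}

theorem one_lt_hj (hl : ∀ x ∈ l, 2 ≤ x) (hne : l ≠ []) : 1 < hj l := by
  induction l with
  | nil => exact absurd rfl hne
  | cons c cs ih =>
    have hc : 2 ≤ c := hl c List.mem_cons_self
    have hinv : (hj cs)⁻¹ < 1 := by
      rcases eq_or_ne cs [] with rfl | hcs
      · simp [hj]
      · exact inv_lt_one_of_one_lt₀ (ih (fun x hx => hl x (.tail _ hx)) hcs)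
    simp only [hj]
    linarith

theorem hj_pos (hl : ∀ x ∈ l, 2 ≤ x) (hne : l ≠ []) : 0 < hj l :=
  zero_lt_one.trans (one_lt_hj hl hne)

theorem hj_inv_nonneg (hl : ∀ x ∈ l, 2 ≤ x) : 0 ≤ (hj l)⁻¹ := by
  rcases eq_or_ne l [] with rfl | hne
  · simp [hj]
  · exact inv_nonneg.mpr (hj_pos hl hne).le

theorem hj_inv_lt_one (hl : ∀ x ∈ l, 2 ≤ x) : (hj l)⁻¹ < 1 := by
  rcases eq_or_ne l [] with rfl | hne
  · simp [hj]
  · exact inv_lt_one_of_one_lt₀ (one_lt_hj hl hne)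

theorem hj_cons_le (hl : ∀ x ∈ l, 2 ≤ x) : hj (u :: l) ≤ u :=
  sub_le_self u (hj_inv_nonneg hl)

theorem hj_cons_lt (hl : ∀ x ∈ l, 2 ≤ x) (hne : l ≠ []) : hj (u :: l) < u :=
  sub_lt_self u (inv_pos.mpr (hj_pos hl hne))

theorem sub_one_lt_hj_cons (hl : ∀ x ∈ l, 2 ≤ x) : u - 1 < hj (u :: l) :=
  sub_lt_sub_left (hj_inv_lt_one hl) u

theorem ne_nil_of_hj_inv_add_hj_inv_eq_one (hm : ∀ x ∈ m, 2 ≤ x)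
    (h : (hj l)⁻¹ + (hj m)⁻¹ = 1) : l ≠ [] := by
  rintro rfl
  rw [hj, inv_zero, zero_add] at h
  exact (hj_inv_lt_one hm).ne h

theorem lt_three_or_lt_three_of_hj_inv_add_hj_inv_eq_one (hl : ∀ x ∈ l, 2 ≤ x)
    (hm : ∀ x ∈ m, 2 ≤ x) (h : (hj (u :: l))⁻¹ + (hj (v :: m))⁻¹ = 1) : u < 3 ∨ v < 3 := by
  by_contra! huv
  have hu : (hj (u :: l))⁻¹ < 2⁻¹ :=
    inv_strictAnti₀ two_pos (by linarith [sub_one_lt_hj_cons (u := u) hl])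
  have hv : (hj (v :: m))⁻¹ < 2⁻¹ :=
    inv_strictAnti₀ two_pos (by linarith [sub_one_lt_hj_cons (u := v) hm])
  linarith

theorem eq_nil_of_hj_inv_add_hj_inv_eq_one (hl : ∀ x ∈ l, 2 ≤ x) (hm : ∀ x ∈ m, 2 ≤ x)
    (h : (hj (2 :: l))⁻¹ + (hj (2 :: m))⁻¹ = 1) : l = [] := by
  by_contra hne
  have hl' : 2⁻¹ < (hj (2 :: l))⁻¹ :=
    inv_strictAnti₀ (hj_pos (List.forall_mem_cons.mpr ⟨le_rfl, hl⟩) (List.cons_ne_nil _ _))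
      (hj_cons_lt hl hne)
  have hm' : 2⁻¹ ≤ (hj (2 :: m))⁻¹ :=
    inv_anti₀ (hj_pos (List.forall_mem_cons.mpr ⟨le_rfl, hm⟩) (List.cons_ne_nil _ _))
      (hj_cons_le hm)
  linarith

theorem hj_inv_add_hj_inv_eq_one_of_cons_two (hu : hj (u :: l) ≠ 0) (hv : hj (2 :: m) ≠ 0)
    (h : (hj (u :: l))⁻¹ + (hj (2 :: m))⁻¹ = 1) : (hj ((u - 1) :: l))⁻¹ + (hj m)⁻¹ = 1 := by
  rw [inv_add_inv_eq_one_iff hu hv] at h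
  simp only [hj] at h ⊢
  rw [inv_eq_of_mul_eq_one_right (b := 1 - (hj m)⁻¹) (by linear_combination h)]
  ring

end hj

theorem castList_cons (b : ℤ) (l : List ℤ) : castList (b :: l) = (b : ℚ) :: castList l := rfl

-- `castList` elaborates with the coercion `List ℤ → List ℚ` (a `flatMap`), not as this `map`.
theorem castList_eq_map (l : List ℤ) : castList l = l.map (Int.cast) := by
  induction l with
  | nil => rfl
  | cons b l ih => rw [castList_cons, ih, List.map_cons]

theorem castList_eq_nil {l : List ℤ} : castList l = [] ↔ l = [] := by simp [castList_eq_map]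

theorem two_le_of_mem_castList {l : List ℤ} (hl : ∀ x ∈ l, 2 ≤ x) : ∀ x ∈ castList l, 2 ≤ x := by
  intro x hx
  obtain ⟨z, hz, rfl⟩ := List.mem_map.mp (castList_eq_map l ▸ hx)
  exact_mod_cast hl z hz

theorem eq_two_or_eq_two_of_hj_inv_add_hj_inv_eq_one {b c : ℤ} {B A : List ℤ}
    (hB : ∀ x ∈ b :: B, 2 ≤ x) (hA : ∀ x ∈ c :: A, 2 ≤ x)
    (h : (hj ((b : ℚ) :: castList B))⁻¹ + (hj ((c : ℚ) :: castList A))⁻¹ = 1) :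
    b = 2 ∨ c = 2 := by
  have h3 : b < 3 ∨ c < 3 := by
    exact_mod_cast lt_three_or_lt_three_of_hj_inv_add_hj_inv_eq_one
      (two_le_of_mem_castList fun x hx => hB x (.tail _ hx))
      (two_le_of_mem_castList fun x hx => hA x (.tail _ hx)) h
  have hb := hB b List.mem_cons_self
  have hc := hA c List.mem_cons_self
  omega

theorem sum_map_sub_one_eq_of_hj_inv_add_hj_inv (B A : List ℤ) (hB : ∀ x ∈ B, 2 ≤ x)
    (hA : ∀ x ∈ A, 2 ≤ x) (hdual : (hj (castList B))⁻¹ + (hj (castList A))⁻¹ = 1) :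
    (B.map (fun x => x - 1)).sum = (B.length : ℤ) + A.length - 1 := by
  have hBq := two_le_of_mem_castList hB
  have hAq := two_le_of_mem_castList hA
  match B, A with
  | [], _ => exact absurd rfl (ne_nil_of_hj_inv_add_hj_inv_eq_one hAq hdual)
  | _, [] => exact absurd rfl (ne_nil_of_hj_inv_add_hj_inv_eq_one hBq ((add_comm _ _).trans hdual))
  | b :: B', c :: A' =>
    have hB' : ∀ x ∈ B', 2 ≤ x := fun x hx => hB x (.tail _ hx)
    have hA' : ∀ x ∈ A', 2 ≤ x := fun x hx => hA x (.tail _ hx)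
    have hBq' := two_le_of_mem_castList hB'
    have hAq' := two_le_of_mem_castList hA'
    have hBne := (hj_pos hBq (List.cons_ne_nil _ _)).ne'
    have hAne := (hj_pos hAq (List.cons_ne_nil _ _)).ne'
    simp only [castList_cons] at hdual hBne hAne
    have hhead := eq_two_or_eq_two_of_hj_inv_add_hj_inv_eq_one hB hA hdual
    rcases eq_or_ne b 2 with rfl | hb2
    · rw [Int.cast_ofNat] at hdual hBne
      rcases eq_or_ne c 2 with rfl | hc2
      · rw [Int.cast_ofNat] at hdual
        obtain rfl := castList_eq_nil.mp (eq_nil_of_hj_inv_add_hj_inv_eq_one hBq' hAq' hdual)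
        obtain rfl := castList_eq_nil.mp
          (eq_nil_of_hj_inv_add_hj_inv_eq_one hAq' hBq' ((add_comm _ _).trans hdual))
        rfl
      · have hdual' : (hj (castList B'))⁻¹ + (hj (castList ((c - 1) :: A')))⁻¹ = 1 := by
          rw [castList_cons, Int.cast_sub, Int.cast_one, add_comm]
          exact hj_inv_add_hj_inv_eq_one_of_cons_two hAne hBne ((add_comm _ _).trans hdual)
        have ih := sum_map_sub_one_eq_of_hj_inv_add_hj_inv B' ((c - 1) :: A')
          hB' (List.forall_mem_cons.mpr ⟨by have := hA c List.mem_cons_self; omega, hA'⟩) hdual'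
        simp only [List.map_cons, List.sum_cons, List.length_cons, Nat.cast_add, Nat.cast_one]
          at ih ⊢
        linarith
    · obtain rfl : c = 2 := hhead.resolve_left hb2
      rw [Int.cast_ofNat] at hdual hAne
      have hdual' : (hj (castList ((b - 1) :: B')))⁻¹ + (hj (castList A'))⁻¹ = 1 := by
        rw [castList_cons, Int.cast_sub, Int.cast_one]
        exact hj_inv_add_hj_inv_eq_one_of_cons_two hBne hAne hdual
      have ih := sum_map_sub_one_eq_of_hj_inv_add_hj_inv ((b - 1) :: B') A'
        (List.forall_mem_cons.mpr ⟨by have := hB b List.mem_cons_self; omega, hB'⟩) hA' hdual'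
      simp only [List.map_cons, List.sum_cons, List.length_cons, Nat.cast_add, Nat.cast_one]
        at ih ⊢
      linarith
termination_by B.length + A.length

theorem stmt_4_general (n a : ℤ) (ha : 1 ≤ a) (han : a < n)
    (B A : List ℤ) (hB : ∀ x ∈ B, 2 ≤ x) (hA : ∀ x ∈ A, 2 ≤ x)
    (hBval : hj (castList B) = (n : ℚ) / a)
    (hAval : hj (castList A) = (n : ℚ) / (n - a)) :
    (B.map (fun x => x - 1)).sum = (A.map (fun x => x - 1)).sum ∧
    (B.map (fun x => x - 1)).sum = (B.length : ℤ) + (A.length : ℤ) - 1 := by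
  have hn : (n : ℚ) ≠ 0 := by exact_mod_cast (by omega : n ≠ 0)
  have hdual : (hj (castList B))⁻¹ + (hj (castList A))⁻¹ = 1 := by
    rw [hBval, hAval, inv_div, inv_div, ← add_div, add_sub_cancel, div_self hn]
  have hBsum := sum_map_sub_one_eq_of_hj_inv_add_hj_inv B A hB hA hdual
  have hAsum := sum_map_sub_one_eq_of_hj_inv_add_hj_inv A B hA hB ((add_comm _ _).trans hdual)
  exact ⟨by omega, hBsum⟩

theorem stmt_4 (n a : ℤ) (ha : 1 ≤ a) (han : a < n) (hcop : Int.gcd n a = 1)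
    (B A : List ℤ) (hB : ∀ x ∈ B, 2 ≤ x) (hA : ∀ x ∈ A, 2 ≤ x)
    (hBval : hj (castList B) = (n : ℚ) / a)
    (hAval : hj (castList A) = (n : ℚ) / (n - a)) :
    (B.map (fun x => x - 1)).sum = (A.map (fun x => x - 1)).sum ∧
    (B.map (fun x => x - 1)).sum = (B.length : ℤ) + (A.length : ℤ) - 1 :=
  stmt_4_general n a ha han B A hB hA hBval hAval
end

section
/- Let d ≥ 1, n ≥ 2, 1 ≤ a < n with gcd(n,a) = 1, and suppose [b_1, …, b_r] (with all b_i ≥ 2) is the Hirzebruch–Jung expansion of dn²/(dna−1). Then: (i) [2, b_1, …, b_{r−1}, b_r + 1] is the Hirzebruch–Jung expansion of d(2n−a)²/(d(2n−a)n − 1); and (ii) [b_1 + 1, b_2, …, b_r, 2] is the Hirzebruch–Jung expansion of d(n+a)²/(d(n+a)a − 1). In particular both operations again produce strings of singularities of class T. -/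
open Matrix

def hjStep (c : ℤ) : Matrix (Fin 2) (Fin 2) ℤ := !![c, -1; 1, 0]

/-- The first column of `hjMatrix [b₁, …, b_r]` holds the numerator and denominator of
`[b₁, …, b_r]`, the second one minus those of `[b₁, …, b_{r-1}]`. -/
def hjMatrix (l : List ℤ) : Matrix (Fin 2) (Fin 2) ℤ := (l.map hjStep).prod

@[simp]
lemma hjMatrix_nil : hjMatrix [] = 1 := rfl

@[simp]
lemma hjMatrix_cons (c : ℤ) (l : List ℤ) : hjMatrix (c :: l) = hjStep c * hjMatrix l :=
  List.prod_cons

@[simp]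
lemma hjMatrix_append (l l' : List ℤ) : hjMatrix (l ++ l') = hjMatrix l * hjMatrix l' := by
  simp [hjMatrix]

lemma det_hjMatrix (l : List ℤ) : (hjMatrix l).det = 1 := by
  induction l with
  | nil => simp
  | cons c l ih => rw [hjMatrix_cons, det_mul, ih, hjStep, det_fin_two_of]; ring

lemma hjStep_add_one_eq_mul_hjStep (c : ℤ) : hjStep (c + 1) = !![1, 1; 0, 1] * hjStep c := by
  simp [hjStep]

lemma hjStep_add_one_eq_hjStep_mul (c : ℤ) : hjStep (c + 1) = hjStep c * !![1, 0; -1, 1] := by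
  simp [hjStep]

lemma hjStep_mul_apply_zero_zero (c : ℤ) (A : Matrix (Fin 2) (Fin 2) ℤ) :
    (hjStep c * A) 0 0 = c * A 0 0 - A 1 0 := by
  simp [hjStep, mul_apply, Fin.sum_univ_two]
  ring

lemma hjStep_mul_apply_one_zero (c : ℤ) (A : Matrix (Fin 2) (Fin 2) ℤ) :
    (hjStep c * A) 1 0 = A 0 0 := by
  simp [hjStep, mul_apply, Fin.sum_univ_two]

lemma mul_hjStep_apply_zero_zero (A : Matrix (Fin 2) (Fin 2) ℤ) (c : ℤ) :
    (A * hjStep c) 0 0 = c * A 0 0 + A 0 1 := by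
  simp [hjStep, mul_apply, Fin.sum_univ_two]
  ring

lemma mul_hjStep_apply_zero_one (A : Matrix (Fin 2) (Fin 2) ℤ) (c : ℤ) :
    (A * hjStep c) 0 1 = -A 0 0 := by
  simp [hjStep, mul_apply, Fin.sum_univ_two]

lemma hjMatrix_col_zero_bounds {l : List ℤ} (h2 : ∀ x ∈ l, 2 ≤ x) :
    0 ≤ hjMatrix l 1 0 ∧ hjMatrix l 1 0 < hjMatrix l 0 0 := by
  induction l with
  | nil => simp
  | cons c l ih =>
    rw [List.forall_mem_cons] at h2
    obtain ⟨hq, hqp⟩ := ih h2.2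
    rw [hjMatrix_cons, hjStep_mul_apply_zero_zero, hjStep_mul_apply_one_zero]
    constructor <;> nlinarith [h2.1]

lemma hjMatrix_row_zero_bounds {l : List ℤ} (h2 : ∀ x ∈ l, 2 ≤ x) :
    0 ≤ -hjMatrix l 0 1 ∧ -hjMatrix l 0 1 < hjMatrix l 0 0 := by
  induction l using List.reverseRecOn with
  | nil => simp
  | append_singleton l c ih =>
    rw [List.forall_mem_append, List.forall_mem_singleton] at h2
    obtain ⟨hp', hp'p⟩ := ih h2.1
    rw [hjMatrix_append, hjMatrix_cons, hjMatrix_nil, Matrix.mul_one, mul_hjStep_apply_zero_zero,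
      mul_hjStep_apply_zero_one]
    constructor <;> nlinarith [h2.2]

lemma hj_castList_eq_div {l : List ℤ} (h2 : ∀ x ∈ l, 2 ≤ x) :
    hj (castList l) = (hjMatrix l 0 0 : ℚ) / hjMatrix l 1 0 := by
  induction l with
  | nil => simp [hj, castList]
  | cons c l ih =>
    rw [List.forall_mem_cons] at h2
    have hp : (hjMatrix l 0 0 : ℚ) ≠ 0 := by
      have := hjMatrix_col_zero_bounds h2.2
      exact_mod_cast (by omega : hjMatrix l 0 0 ≠ 0)
    change (c : ℚ) - (hj (castList l))⁻¹ = _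
    rw [ih h2.2, hjMatrix_cons, hjStep_mul_apply_zero_zero, hjStep_mul_apply_one_zero, inv_div]
    field_simp
    push_cast
    ring

lemma hjMatrix_col_zero_eq_of_hj_eq {l : List ℤ} (h2 : ∀ x ∈ l, 2 ≤ x) {p q : ℤ} (hp : 0 < p)
    (hq : 0 < q) (hpq : IsCoprime p q) (h : hj (castList l) = p / q) :
    hjMatrix l 0 0 = p ∧ hjMatrix l 1 0 = q := by
  rw [hj_castList_eq_div h2] at h
  have hq' : 0 < hjMatrix l 1 0 := by
    refine (hjMatrix_col_zero_bounds h2).1.lt_of_ne fun h0 ↦ ?_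
    rw [← h0, Int.cast_zero, div_zero] at h
    exact (div_pos (Int.cast_pos.mpr hp) (Int.cast_pos.mpr hq)).ne h
  have hcop : IsCoprime (hjMatrix l 0 0) (hjMatrix l 1 0) := by
    refine ⟨hjMatrix l 1 1, -hjMatrix l 0 1, ?_⟩
    linear_combination (det_fin_two (hjMatrix l)).symm.trans (det_hjMatrix l)
  exact Rat.div_int_inj hq' hq (Int.isCoprime_iff_gcd_eq_one.mp hcop)
    (Int.isCoprime_iff_gcd_eq_one.mp hpq) h

lemma eq_of_mul_sub_mul_eq_one {N M x y x' y' : ℤ} (h : x * M - N * y = 1)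
    (h' : x' * M - N * y' = 1) (hx : 0 ≤ x) (hxN : x < N) (hx' : 0 ≤ x') (hx'N : x' < N) :
    x = x' ∧ y = y' := by
  have hcop : IsCoprime N M := ⟨-y, x, by linear_combination h⟩
  have hdvd : N ∣ (x - x') * M := ⟨y - y', by linear_combination h - h'⟩
  have hxx' : x - x' = 0 :=
    Int.eq_zero_of_abs_lt_dvd (hcop.dvd_of_dvd_mul_right hdvd)
      (abs_sub_lt_iff.mpr ⟨by omega, by omega⟩)
  have hyy' : N * (y - y') = 0 := by linear_combination h' - h + M * hxx'
  have := (mul_eq_zero.mp hyy').resolve_left (by omega)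
  exact ⟨by omega, by omega⟩

def classTMatrix (d n a : ℤ) : Matrix (Fin 2) (Fin 2) ℤ :=
  !![d * n ^ 2, -(d * n * (n - a) - 1); d * n * a - 1, -(d * a * (n - a) - 1)]

lemma hjMatrix_eq_classTMatrix {d n a : ℤ} (hd : 1 ≤ d) (ha : 1 ≤ a) (han : a < n) {l : List ℤ}
    (h2 : ∀ x ∈ l, 2 ≤ x) (h : hj (castList l) = (d * n ^ 2 : ℚ) / (d * n * a - 1)) :
    hjMatrix l = classTMatrix d n a := by
  have hdn : 2 ≤ d * n := by nlinarith
  have hdna : d * n ≤ d * n * a := le_mul_of_one_le_right (by omega) ha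
  have hdnna : d * n ≤ d * n * (n - a) := le_mul_of_one_le_right (by omega) (by omega)
  have hcop : IsCoprime (d * n ^ 2) (d * n * a - 1) := ⟨d * a ^ 2, -(d * n * a + 1), by ring⟩
  obtain ⟨h00, h10⟩ := hjMatrix_col_zero_eq_of_hj_eq h2 (by nlinarith) (by omega) hcop
    (by push_cast; exact h)
  have hdet := (det_fin_two (hjMatrix l)).symm.trans (det_hjMatrix l)
  rw [h00, h10] at hdet
  obtain ⟨hp', hp'N⟩ := hjMatrix_row_zero_bounds h2
  rw [h00] at hp'N
  obtain ⟨h01, h11⟩ := eq_of_mul_sub_mul_eq_one (N := d * n ^ 2) (M := d * n * a - 1)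
    (x := -hjMatrix l 0 1) (y := -hjMatrix l 1 1) (x' := d * n * (n - a) - 1)
    (y' := d * a * (n - a) - 1) (by linear_combination hdet) (by ring)
    hp' hp'N (by omega) (by nlinarith)
  ext i j
  fin_cases i <;> fin_cases j <;> simp [classTMatrix, h00, h10] <;> linarith

lemma hjStep_two_mul_classTMatrix_mul (d n a : ℤ) :
    hjStep 2 * classTMatrix d n a * !![1, 0; -1, 1] = classTMatrix d (2 * n - a) n := by
  ext i j
  fin_cases i <;> fin_cases j <;> simp [classTMatrix, hjStep, -mul_eq_mul_left_iff] <;> ring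

lemma mul_classTMatrix_mul_hjStep_two (d n a : ℤ) :
    !![1, 1; 0, 1] * classTMatrix d n a * hjStep 2 = classTMatrix d (n + a) a := by
  ext i j
  fin_cases i <;> fin_cases j <;> simp [classTMatrix, hjStep, -mul_eq_mul_left_iff] <;> ring

lemma hj_castList_of_hjMatrix_eq_classTMatrix {d n a : ℤ} {l : List ℤ} (h2 : ∀ x ∈ l, 2 ≤ x)
    (h : hjMatrix l = classTMatrix d n a) :
    hj (castList l) = (d * n ^ 2 : ℚ) / (d * n * a - 1) := by
  rw [hj_castList_eq_div h2, h]
  simp [classTMatrix]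

lemma forall_mem_cons_append_singleton {α : Type*} {P : α → Prop} {c c' : α} {l : List α}
    (hc : P c) (hl : ∀ x ∈ l, P x) (hc' : P c') : ∀ x ∈ c :: (l ++ [c']), P x := by
  simpa [or_imp, forall_and] using ⟨hc, hl, hc'⟩

lemma hjMatrix_two_cons_dropLast_append (l : List ℤ) (hl : l ≠ []) :
    hjMatrix (2 :: (l.dropLast ++ [l.getLast hl + 1])) =
      hjStep 2 * hjMatrix l * !![1, 0; -1, 1] := by
  conv_rhs => rw [← List.dropLast_append_getLast hl]
  simp only [hjMatrix_cons, hjMatrix_append, hjMatrix_nil, Matrix.mul_one,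
    hjStep_add_one_eq_hjStep_mul, Matrix.mul_assoc]

lemma hjMatrix_head_add_one_cons_tail_append (l : List ℤ) (hl : l ≠ []) :
    hjMatrix ((l.head hl + 1) :: (l.tail ++ [2])) =
      !![1, 1; 0, 1] * hjMatrix l * hjStep 2 := by
  conv_rhs => rw [← List.cons_head_tail hl]
  simp only [hjMatrix_cons, hjMatrix_append, hjMatrix_nil, Matrix.mul_one,
    hjStep_add_one_eq_mul_hjStep, Matrix.mul_assoc]

theorem stmt_6_general (d n a : ℤ) (hd : 1 ≤ d) (ha : 1 ≤ a) (han : a < n)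
    (b : List ℤ) (hb : b ≠ []) (h2 : ∀ x ∈ b, 2 ≤ x)
    (hval : hj (castList b) = (d * n ^ 2 : ℚ) / (d * n * a - 1)) :
    hj (castList (2 :: (b.dropLast ++ [b.getLast hb + 1])))
      = (d * (2 * n - a) ^ 2 : ℚ) / (d * (2 * n - a) * n - 1) ∧
    hj (castList ((b.head hb + 1) :: (b.tail ++ [2])))
      = (d * (n + a) ^ 2 : ℚ) / (d * (n + a) * a - 1) := by
  have hT := hjMatrix_eq_classTMatrix hd ha han h2 hval
  have hlast : 2 ≤ b.getLast hb := h2 _ (List.getLast_mem hb)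
  have hhead : 2 ≤ b.head hb := h2 _ (List.head_mem hb)
  constructor
  · exact_mod_cast hj_castList_of_hjMatrix_eq_classTMatrix (n := 2 * n - a) (a := n)
      (forall_mem_cons_append_singleton le_rfl (fun x hx ↦ h2 x (List.mem_of_mem_dropLast hx))
        (by omega))
      (by rw [hjMatrix_two_cons_dropLast_append, hT, hjStep_two_mul_classTMatrix_mul])
  · exact_mod_cast hj_castList_of_hjMatrix_eq_classTMatrix (n := n + a) (a := a)
      (forall_mem_cons_append_singleton (by omega) (fun x hx ↦ h2 x (List.mem_of_mem_tail hx))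
        le_rfl)
      (by rw [hjMatrix_head_add_one_cons_tail_append, hT, mul_classTMatrix_mul_hjStep_two])

theorem stmt_6 (d n a : ℤ) (hd : 1 ≤ d) (hn : 2 ≤ n) (ha : 1 ≤ a) (han : a < n)
    (hcop : Int.gcd n a = 1) (b : List ℤ) (hb : b ≠ []) (h2 : ∀ x ∈ b, 2 ≤ x)
    (hval : hj (castList b) = (d * n ^ 2 : ℚ) / (d * n * a - 1)) :
    hj (castList (2 :: (b.dropLast ++ [b.getLast hb + 1])))
      = (d * (2 * n - a) ^ 2 : ℚ) / (d * (2 * n - a) * n - 1) ∧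
    hj (castList ((b.head hb + 1) :: (b.tail ++ [2])))
      = (d * (n + a) ^ 2 : ℚ) / (d * (n + a) * a - 1) :=
  stmt_6_general d n a hd ha han b hb h2 hval
end
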